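/- arXiv:1606.05596 — 2 statements merged into one kernel-verified Lean document; each statement's English description precedes it below -/
import Mathlib

section
/- Fix an integer N ≥ 2 and a probability vector p on Fin r (the ground-truth distribution). For an integer c ≥ 2, let R(p,c) = 1 - (N/(2·(N-1))) · VI₂(p, u_c) denote the Rand index between the ground truth and a statistically independent balanced candidate partition with c clusters, where u_c is the uniform probability vector on Fin c. Then: (1) if ∑ i, (p i)² > 1/2, then R(p,·) is strictly decreasing in c; (2) if ∑ i, (p i)² = 1/2, then R(p,·) is constant in c; (3) if ∑ i, (p i)² < 1/2, then R(p,·) is strictly increasing in c. -/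
/-- The quadratic entropy of a finitely supported probability vector. -/
noncomputable def quadEntropy {α : Type*} [Fintype α] (x : α → ℝ) : ℝ :=
  2 * (1 - ∑ i, (x i) ^ 2)

/-- The quadratic variation of information between (the distributions of)
two statistically independent partitions. -/
noncomputable def VI2 {α β : Type*} [Fintype α] [Fintype β] (p : α → ℝ) (q : β → ℝ) : ℝ :=
  2 * quadEntropy (fun ij : α × β => p ij.1 * q ij.2) - quadEntropy p - quadEntropy q

/-- The uniform (balanced) probability vector on `Fin c`. -/
noncomputable def unif (c : ℕ) : Fin c → ℝ := fun _ => 1 / (c : ℝ)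

/-- The (expected) Rand index between a ground-truth distribution `p` and a
statistically independent balanced candidate partition with `c` clusters. -/
noncomputable def randGT (N : ℕ) {r : ℕ} (p : Fin r → ℝ) (c : ℕ) : ℝ :=
  1 - ((N : ℝ) / (2 * ((N : ℝ) - 1))) * VI2 p (unif c)

/-! With `S(x) = ∑ xᵢ²`, the product vector has `S(p ⊗ q) = S(p) S(q)`, so
`VI₂(p, q) = 2 (S(p) + S(q) - 2 S(p) S(q))`. Since `S(u_c) = 1/c`, the Rand index is
`1 - K S(p) + K (2 S(p) - 1) / c` with `K = N/(N-1) > 0`: it depends on `c` only through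
`(2 S(p) - 1) / c`, and the sign of `2 S(p) - 1` decides the monotonicity. -/

open Finset

lemma sum_sq_prod {α β : Type*} [Fintype α] [Fintype β] (p : α → ℝ) (q : β → ℝ) :
    ∑ ij : α × β, (p ij.1 * q ij.2) ^ 2 = (∑ i, p i ^ 2) * ∑ j, q j ^ 2 := by
  simp_rw [mul_pow, Fintype.sum_mul_sum, Fintype.sum_prod_type]

lemma VI2_eq {α β : Type*} [Fintype α] [Fintype β] (p : α → ℝ) (q : β → ℝ) :
    VI2 p q = 2 * ((∑ i, p i ^ 2) + (∑ j, q j ^ 2) - 2 * (∑ i, p i ^ 2) * ∑ j, q j ^ 2) := by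
  rw [VI2, quadEntropy, sum_sq_prod, quadEntropy, quadEntropy]
  ring

-- Also true for `c = 0`, both sides being `0`.
lemma sum_sq_unif (c : ℕ) : ∑ j, unif c j ^ 2 = 1 / c := by
  rcases eq_or_ne (c : ℝ) 0 with hc | hc
  · simp [unif, hc]
  · simp only [unif, sum_const, card_univ, Fintype.card_fin, nsmul_eq_mul]
    field_simp

lemma randGT_eq (N : ℕ) {r : ℕ} (p : Fin r → ℝ) (c : ℕ) :
    randGT N p c = 1 - (N / (N - 1)) * ∑ i, p i ^ 2
      + (N / (N - 1)) * (2 * ∑ i, p i ^ 2 - 1) / c := by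
  rw [randGT, VI2_eq, sum_sq_unif, div_mul_eq_div_div_swap]
  ring

theorem randGT_bias_of_sum_sq_general {N r : ℕ} (hN : 2 ≤ N)
    (p : Fin r → ℝ) :
    ((1 : ℝ) / 2 < ∑ i, (p i) ^ 2 →
      ∀ c c' : ℕ, 2 ≤ c → c < c' → randGT N p c' < randGT N p c) ∧
    (∑ i, (p i) ^ 2 = (1 : ℝ) / 2 →
      ∀ c c' : ℕ, 2 ≤ c → 2 ≤ c' → randGT N p c = randGT N p c') ∧
    (∑ i, (p i) ^ 2 < (1 : ℝ) / 2 →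
      ∀ c c' : ℕ, 2 ≤ c → c < c' → randGT N p c < randGT N p c') := by
  have hK : 0 < (N : ℝ) / (N - 1) := by
    have : (2 : ℝ) ≤ N := by exact_mod_cast hN
    exact div_pos (by linarith) (by linarith)
  simp only [randGT_eq, add_lt_add_iff_left]
  generalize (N : ℝ) / (N - 1) = K at hK ⊢
  simp only [div_eq_mul_inv]
  refine ⟨fun h c c' hc hcc' => ?_, fun h _ _ _ _ => by simp [h], fun h c c' hc hcc' => ?_⟩
  all_goals have hc0 : (0 : ℝ) < c := by exact_mod_cast (by omega : 0 < c)
  · exact mul_lt_mul_of_pos_left (inv_strictAnti₀ hc0 (by exact_mod_cast hcc'))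
      (mul_pos hK (by linarith))
  · exact mul_lt_mul_of_neg_left (inv_strictAnti₀ hc0 (by exact_mod_cast hcc'))
      (mul_neg_of_pos_of_neg hK (by linarith))

theorem randGT_bias_of_sum_sq {N r : ℕ} (hN : 2 ≤ N)
    (p : Fin r → ℝ) (hp : ∀ i, 0 ≤ p i) (hp1 : ∑ i, p i = 1) :
    ((1 : ℝ) / 2 < ∑ i, (p i) ^ 2 →
      ∀ c c' : ℕ, 2 ≤ c → c < c' → randGT N p c' < randGT N p c) ∧
    (∑ i, (p i) ^ 2 = (1 : ℝ) / 2 →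
      ∀ c c' : ℕ, 2 ≤ c → 2 ≤ c' → randGT N p c = randGT N p c') ∧
    (∑ i, (p i) ^ 2 < (1 : ℝ) / 2 →
      ∀ c c' : ℕ, 2 ≤ c → c < c' → randGT N p c < randGT N p c') :=
  randGT_bias_of_sum_sq_general hN p
end

section
/- Fix an integer N ≥ 2 and an integer r ≥ 2, and let u_r be the uniform (balanced) ground-truth probability vector on Fin r, u_r i = 1/r. For an integer c ≥ 2, let R(u_r,c) = 1 - (N/(2·(N-1))) · VI₂(u_r, u_c) denote the Rand index between the ground truth and a statistically independent balanced candidate partition with c clusters, where u_c is the uniform probability vector on Fin c. Then: (1) if r = 2, R(u_r,·) is constant in c, i.e., R(u_r,c) = R(u_r,c') for all integers c, c' ≥ 2; (2) if r > 2, R(u_r,·) is strictly increasing in c, i.e., for all integers 2 ≤ c < c', R(u_r,c) < R(u_r,c'). -/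
lemma randGT_formula (N r c : ℕ) (hr : 1 ≤ r) (hc : 1 ≤ c) :
    randGT N (unif r) c =
      1 - ((N : ℝ) / (2 * ((N : ℝ) - 1))) * (2 / r + (2 / c) * (1 - 2 / r)) := by
  have hr0 : (r : ℝ) ≠ 0 := by positivity
  have hc0 : (c : ℝ) ≠ 0 := by positivity
  unfold randGT VI2 quadEntropy unif
  simp [Finset.sum_const, Finset.card_univ, Fintype.card_prod]
  ring_nf
  field_simp
  ring_nf
  tauto

theorem randGT_bias_uniform_ground_truth {N r : ℕ} (hN : 2 ≤ N) (hr : 2 ≤ r) :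
    (r = 2 → ∀ c c' : ℕ, 2 ≤ c → 2 ≤ c' → randGT N (unif r) c = randGT N (unif r) c') ∧
    (2 < r → ∀ c c' : ℕ, 2 ≤ c → c < c' → randGT N (unif r) c < randGT N (unif r) c') := by
  have hr1 : 1 ≤ r := le_trans (by norm_num) hr
  constructor
  · intro hr2 c c' hc hc'
    rw [randGT_formula N r c hr1 (by omega), randGT_formula N r c' hr1 (by omega)]
    subst hr2
    norm_num
  · intro hr2 c c' hc hcc'
    rw [randGT_formula N r c hr1 (by omega), randGT_formula N r c' hr1 (by omega)]
    have hK : 0 < (N : ℝ) / (2 * ((N : ℝ) - 1)) := by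
      apply div_pos
      · exact_mod_cast Nat.lt_of_lt_of_le (by norm_num) hN
      · have : (2 : ℝ) ≤ (N : ℝ) := by exact_mod_cast hN
        linarith
    have hpos : (0 : ℝ) < 1 - 2 / r := by
      rw [sub_pos, div_lt_one (by positivity)]
      exact_mod_cast hr2
    have hlt : (2 : ℝ) / c' < 2 / c := by
      apply div_lt_div_of_pos_left (by norm_num) (by positivity)
      exact_mod_cast hcc'
    have : (2 : ℝ) / c' * (1 - 2 / r) < 2 / c * (1 - 2 / r) :=
      mul_lt_mul_of_pos_right hlt hpos
    nlinarith [hK, this]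
end
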